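/- Let (N₁, ⊴₁, c₁) and (N₂, ⊴₂, c₂) be MinBudget instances on disjoint job sets with schedules S¹ and S² in increasing irreducible structure. Then the concatenation S¹ ⊕ S² is an optimal (minimum-budget) schedule of the series composition (N₁ ∪ N₂, ⊴₁ * ⊴₂, c₁ ∪ c₂). -/

import Mathlib

open List

variable {ι : Type*} [DecidableEq ι]

/-- Total cost of a schedule (list of jobs). -/
def listCost (c : ι → ℝ) (S : List ι) : ℝ := (S.map c).sum

/-- Budget of a schedule: maximum cost of a prefix (the empty prefix has cost 0). -/
def listBudget (c : ι → ℝ) : List ι → ℝ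
  | [] => 0
  | j :: t => max 0 (c j + listBudget c t)

/-- Return of a schedule. -/
def listReturn (c : ι → ℝ) (S : List ι) : ℝ := listCost c S - listBudget c S

/-- `S` enumerates the finite job set `N` without repetition. -/
def IsScheduleOf (N : Finset ι) (S : List ι) : Prop :=
  S.Nodup ∧ ∀ j, j ∈ S ↔ j ∈ N

/-- `S` is a linear extension of the precedence relation `r` (restricted to its jobs). -/
def RespectsOrder (r : ι → ι → Prop) (S : List ι) : Prop :=
  ∀ i j, r i j → i ∈ S → j ∈ S → S.idxOf i ≤ S.idxOf j

/-- Minimum budget over all feasible schedules of the job set `X`. -/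
noncomputable def setBudget (r : ι → ι → Prop) (c : ι → ℝ) (X : Finset ι) : ℝ :=
  sInf {b | ∃ S : List ι, IsScheduleOf X S ∧ RespectsOrder r S ∧ listBudget c S = b}

/-- Total cost of a job set. -/
def setCost (c : ι → ℝ) (X : Finset ι) : ℝ := ∑ j ∈ X, c j

/-- Return of a job set. -/
noncomputable def setReturn (r : ι → ι → Prop) (c : ι → ℝ) (X : Finset ι) : ℝ :=
  setCost c X - setBudget r c X

/-- The cbr-preorder on job sets. -/
def cbrLE (r : ι → ι → Prop) (c : ι → ℝ) (X Y : Finset ι) : Prop :=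
  (setCost c X < 0 ∧ 0 ≤ setCost c Y) ∨
  (setCost c X < 0 ∧ setCost c Y < 0 ∧ setBudget r c X < setBudget r c Y) ∨
  (setCost c X < 0 ∧ setCost c Y < 0 ∧ setBudget r c X = setBudget r c Y ∧
    setReturn r c X ≤ setReturn r c Y) ∨
  (0 ≤ setCost c X ∧ 0 ≤ setCost c Y ∧ setReturn r c X ≤ setReturn r c Y)

/-- `J` is an ideal (downward-closed subset) of `r` restricted to `I`. -/
def IsIdealIn (r : ι → ι → Prop) (I J : Finset ι) : Prop :=
  J ⊆ I ∧ ∀ j ∈ J, ∀ i ∈ I, r i j → i ∈ J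

/-- `F` is a filter (upward-closed subset) of `r` restricted to `I`. -/
def IsFilterIn (r : ι → ι → Prop) (I F : Finset ι) : Prop :=
  F ⊆ I ∧ ∀ i ∈ F, ∀ j ∈ I, r i j → j ∈ F

/-- `I` is an interval of `r` on `N`: intersection of an ideal and a filter. -/
def IsIntervalIn (r : ι → ι → Prop) (N I : Finset ι) : Prop :=
  ∃ J F, IsIdealIn r N J ∧ IsFilterIn r N F ∧ I = J ∩ F

/-- An irreducible interval: every ideal of the restricted order is `⪰` the interval. -/
def IsIrreducibleIn (r : ι → ι → Prop) (c : ι → ℝ) (N I : Finset ι) : Prop :=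
  IsIntervalIn r N I ∧ ∀ J, IsIdealIn r I J → cbrLE r c I J

/-- A schedule (given as blocks `SS`) in increasing irreducible structure. -/
def IncIrrStructure (r : ι → ι → Prop) (c : ι → ℝ) (N : Finset ι)
    (SS : List (List ι)) : Prop :=
  IsScheduleOf N SS.flatten ∧ RespectsOrder r SS.flatten ∧
  (∀ S ∈ SS, IsIrreducibleIn r c N S.toFinset ∧ RespectsOrder r S ∧
    listBudget c S = setBudget r c S.toFinset) ∧
  ∀ i j : Fin SS.length, i < j → cbrLE r c (SS.get i).toFinset (SS.get j).toFinset

/-- The series composition of two partial orders on disjoint job sets. -/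
def seriesRel (r1 r2 : ι → ι → Prop) (N1 N2 : Finset ι) : ι → ι → Prop :=
  fun i j => (i ∈ N1 ∧ j ∈ N1 ∧ r1 i j) ∨ (i ∈ N2 ∧ j ∈ N2 ∧ r2 i j) ∨ (i ∈ N1 ∧ j ∈ N2)

/-!
A feasible schedule `T` of the series composition runs all of `N₁` before `N₂`, so its budget is
`max (budget (T|N₁)) (c(N₁) + budget (T|N₂))`, and the theorem reduces to the optimality of a
schedule `B₁ ⋯ B_k` in increasing irreducible structure. The budget of that schedule is the largest
of the numbers `c(B₁ ∪ ⋯ ∪ B_{i-1}) + b(B_i)`, and each of them is bounded by the budget of any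
feasible `T`: every prefix of `T` meets every block in an ideal, and irreducibility controls the
cost, budget and return of ideals.
-/

section ListSchedules

variable {α : Type*} (c : α → ℝ)

@[simp] lemma listCost_nil : listCost c [] = 0 := rfl

@[simp] lemma listCost_cons (x : α) (S : List α) : listCost c (x :: S) = c x + listCost c S := by
  simp [listCost]

@[simp] lemma listCost_append (A B : List α) :
    listCost c (A ++ B) = listCost c A + listCost c B := by
  simp [listCost]

lemma listBudget_nonneg (S : List α) : 0 ≤ listBudget c S := by
  cases S <;> simp [listBudget]

lemma listBudget_append (A B : List α) :
    listBudget c (A ++ B) = max (listBudget c A) (listCost c A + listBudget c B) := by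
  induction A with
  | nil => simp [listBudget, listBudget_nonneg]
  | cons x A ih =>
    simp only [List.cons_append, listBudget, ih, listCost_cons]
    rw [add_max, max_assoc, ← add_assoc]

lemma listCost_take_le_listBudget (S : List α) (n : ℕ) :
    listCost c (S.take n) ≤ listBudget c S := by
  conv_rhs => rw [← List.take_append_drop n S]
  rw [listBudget_append]
  exact le_max_of_le_right (le_add_of_nonneg_right (listBudget_nonneg c _))

lemma exists_listCost_take_eq_listBudget (S : List α) :
    ∃ n, listCost c (S.take n) = listBudget c S := by
  induction S with
  | nil => exact ⟨0, rfl⟩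
  | cons x S ih =>
    obtain ⟨n, hn⟩ := ih
    rcases le_total (c x + listBudget c S) 0 with h | h
    · exact ⟨0, by simp [listBudget, max_eq_left h]⟩
    · exact ⟨n + 1, by rw [listBudget, max_eq_right h, ← hn]; simp⟩

lemma listBudget_le_of_forall_take {S : List α} {b : ℝ}
    (h : ∀ n, listCost c (S.take n) ≤ b) : listBudget c S ≤ b := by
  obtain ⟨n, hn⟩ := exists_listCost_take_eq_listBudget c S
  exact hn ▸ h n

lemma listBudget_flatten_le : ∀ {SS : List (List α)} {b : ℝ}, 0 ≤ b →
    (∀ L₁ B L₂, SS = L₁ ++ B :: L₂ → listCost c L₁.flatten + listBudget c B ≤ b) →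
    listBudget c SS.flatten ≤ b
  | [], _, hb, _ => hb
  | B :: SS, b, hb, h => by
    have hB : listBudget c B ≤ b := by simpa using h [] B SS rfl
    have hcost : listCost c B ≤ b := by
      simpa using (listCost_take_le_listBudget c B B.length).trans hB
    rw [List.flatten_cons, listBudget_append]
    refine max_le hB ?_
    have := listBudget_flatten_le (SS := SS) (b := b - listCost c B) (by linarith)
      fun L₁ B' L₂ hSS => by
        have := h (B :: L₁) B' L₂ (by simp [hSS])
        simp only [List.flatten_cons, listCost_append] at this
        linarith
    linarith

end ListSchedules

lemma listCost_eq_setCost (c : ι → ℝ) {S : List ι} (hS : S.Nodup) :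
    listCost c S = setCost c S.toFinset :=
  (List.sum_toFinset c hS).symm

lemma List.sum_map_nonpos {α : Type*} {l : List α} {f : α → ℝ} (h : ∀ x ∈ l, f x ≤ 0) :
    (l.map f).sum ≤ 0 := by
  simpa using List.sum_le_sum (g := fun _ => (0 : ℝ)) h

lemma List.exists_take_filter_eq {α : Type*} (p : α → Bool) :
    ∀ (L : List α) (m : ℕ), ∃ n ≤ L.length, (L.filter p).take m = (L.take n).filter p
  | [], _ => ⟨0, le_rfl, by simp⟩
  | x :: L, m => by
    by_cases hx : p x
    · cases m with
      | zero => exact ⟨0, by simp, by simp⟩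
      | succ m =>
        obtain ⟨n, hn, h⟩ := List.exists_take_filter_eq p L m
        exact ⟨n + 1, by simpa using hn, by simp [hx, h]⟩
    · obtain ⟨n, hn, h⟩ := List.exists_take_filter_eq p L m
      exact ⟨n + 1, by simpa using hn, by simp [hx, h]⟩

lemma List.filter_append_filter_not_eq_self {α : Type*} {p : α → Bool} :
    ∀ {l : List α}, l.Pairwise (fun a b => p b → p a) → l.filter p ++ l.filter (!p ·) = l
  | [], _ => rfl
  | x :: l, hl => by
    obtain ⟨hx, hl⟩ := List.pairwise_cons.mp hl
    by_cases hpx : p x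
    · simp [hpx, List.filter_append_filter_not_eq_self hl]
    · have hnp : ∀ b ∈ l, ¬ p b := fun b hb hpb => hpx (hx b hb hpb)
      simpa [hpx, List.filter_eq_nil_iff.mpr hnp] using hnp

lemma List.toFinset_take_subset_toFinset_take {l : List ι} {m n : ℕ} (h : m ≤ n) :
    (l.take m).toFinset ⊆ (l.take n).toFinset := fun _ hx =>
  List.mem_toFinset.mpr ((List.take_prefix_take_left h).subset (List.mem_toFinset.mp hx))

lemma respectsOrder_iff_pairwise {r : ι → ι → Prop} {S : List ι} (hS : S.Nodup) :
    RespectsOrder r S ↔ S.Pairwise fun a b => ¬ r b a := by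
  rw [List.pairwise_iff_getElem]
  constructor
  · intro h i j hi hj hij hr
    have := h _ _ hr (List.getElem_mem hj) (List.getElem_mem hi)
    rw [hS.idxOf_getElem, hS.idxOf_getElem] at this
    omega
  · intro h i j hr hi hj
    by_contra hlt
    have hj' := List.idxOf_lt_length_iff.mpr hj
    have hi' := List.idxOf_lt_length_iff.mpr hi
    exact h _ _ hj' hi' (by omega) (by simpa [List.getElem_idxOf] using hr)

def IsFeasible (r : ι → ι → Prop) (X : Finset ι) (S : List ι) : Prop :=
  IsScheduleOf X S ∧ RespectsOrder r S

section Feasible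

variable {r : ι → ι → Prop} {c : ι → ℝ} {N X Y : Finset ι} {S : List ι}

lemma isFeasible_iff :
    IsFeasible r X S ↔ S.Nodup ∧ (∀ j, j ∈ S ↔ j ∈ X) ∧ S.Pairwise fun a b => ¬ r b a := by
  unfold IsFeasible IsScheduleOf
  constructor
  · rintro ⟨⟨hS, hmem⟩, hr⟩
    exact ⟨hS, hmem, (respectsOrder_iff_pairwise hS).mp hr⟩
  · rintro ⟨hS, hmem, hr⟩
    exact ⟨⟨hS, hmem⟩, (respectsOrder_iff_pairwise hS).mpr hr⟩

lemma IsFeasible.nodup (h : IsFeasible r X S) : S.Nodup := h.1.1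

lemma IsFeasible.mem_iff (h : IsFeasible r X S) {j : ι} : j ∈ S ↔ j ∈ X := h.1.2 j

lemma IsFeasible.pairwise (h : IsFeasible r X S) : S.Pairwise fun a b => ¬ r b a :=
  (isFeasible_iff.mp h).2.2

lemma IsFeasible.toFinset_eq (h : IsFeasible r X S) : S.toFinset = X := by
  ext j; rw [List.mem_toFinset, h.mem_iff]

lemma IsFeasible.listCost_eq (h : IsFeasible r X S) : listCost c S = setCost c X := by
  rw [listCost_eq_setCost c h.nodup, h.toFinset_eq]

lemma IsFeasible.toFinset_take_subset (h : IsFeasible r N S) (n : ℕ) : (S.take n).toFinset ⊆ N :=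
  fun _ hx => h.mem_iff.mp (List.mem_of_mem_take (List.mem_toFinset.mp hx))

lemma IsFeasible.of_rel_imp (h : IsFeasible r X S) {r' : ι → ι → Prop}
    (hr : ∀ a ∈ X, ∀ b ∈ X, r' a b → r a b) : IsFeasible r' X S :=
  isFeasible_iff.mpr ⟨h.nodup, fun _ => h.mem_iff, h.pairwise.imp_of_mem fun ha hb hab hr' =>
    hab (hr _ (h.mem_iff.mp hb) _ (h.mem_iff.mp ha) hr')⟩

lemma IsFeasible.filter (h : IsFeasible r N S) (hX : X ⊆ N) :
    IsFeasible r X (S.filter (· ∈ X)) := by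
  refine isFeasible_iff.mpr ⟨h.nodup.filter _, fun j => ?_, h.pairwise.filter _⟩
  simpa [h.mem_iff] using fun hj => hX hj

lemma IsFeasible.append {A B : List ι} (hA : IsFeasible r X A) (hB : IsFeasible r Y B)
    (hXY : _root_.Disjoint X Y) (hYX : ∀ a ∈ X, ∀ b ∈ Y, ¬ r b a) :
    IsFeasible r (X ∪ Y) (A ++ B) := by
  refine isFeasible_iff.mpr ⟨?_, fun j => ?_, ?_⟩
  · exact List.nodup_append.mpr ⟨hA.nodup, hB.nodup, fun a ha b hb hab =>
      Finset.disjoint_left.mp hXY (hA.mem_iff.mp ha) (hab ▸ hB.mem_iff.mp hb)⟩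
  · simp [hA.mem_iff, hB.mem_iff]
  · exact List.pairwise_append.mpr ⟨hA.pairwise, hB.pairwise, fun a ha b hb =>
      hYX a (hA.mem_iff.mp ha) b (hB.mem_iff.mp hb)⟩

lemma IsFeasible.isIdealIn_take_inter (h : IsFeasible r N S) (hY : Y ⊆ N) (n : ℕ) :
    IsIdealIn r Y ((S.take n).toFinset ∩ Y) := by
  refine ⟨Finset.inter_subset_right, fun j hj i hi hij => ?_⟩
  simp only [Finset.mem_inter, List.mem_toFinset] at hj ⊢
  refine ⟨?_, hi⟩
  have hiS : i ∈ S.take n ++ S.drop n := by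
    rw [List.take_append_drop]; exact h.mem_iff.mpr (hY hi)
  rcases List.mem_append.mp hiS with hi' | hi'
  · exact hi'
  · have hp := h.pairwise
    rw [← List.take_append_drop n S, List.pairwise_append] at hp
    exact absurd hij (hp.2.2 j hj.1 i hi')

lemma listCost_filter_take (c : ι → ℝ) (hS : S.Nodup) (n : ℕ) :
    listCost c ((S.take n).filter (· ∈ X)) = setCost c ((S.take n).toFinset ∩ X) := by
  rw [listCost_eq_setCost c ((hS.sublist (List.take_sublist n S)).filter _), List.toFinset_filter]
  simp [Finset.filter_mem_eq_inter]

lemma setCost_take_le_listBudget (c : ι → ℝ) (hS : S.Nodup) (n : ℕ) :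
    setCost c (S.take n).toFinset ≤ listBudget c S := by
  rw [← listCost_eq_setCost c (hS.sublist (List.take_sublist n S))]
  exact listCost_take_le_listBudget c S n

lemma listBudget_filter_le (hS : S.Nodup) {b : ℝ}
    (h : ∀ n, setCost c ((S.take n).toFinset ∩ X) ≤ b) : listBudget c (S.filter (· ∈ X)) ≤ b := by
  refine listBudget_le_of_forall_take c fun m => ?_
  obtain ⟨n, -, hmn⟩ := List.exists_take_filter_eq (· ∈ X) S m
  rw [hmn, listCost_filter_take c hS]
  exact h n

end Feasible

section SetBudget

variable {r : ι → ι → Prop} {c : ι → ℝ} {N X : Finset ι} {S : List ι}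

lemma setBudget_le_listBudget (h : IsFeasible r X S) : setBudget r c X ≤ listBudget c S :=
  csInf_le ⟨0, by rintro _ ⟨S', -, -, rfl⟩; exact listBudget_nonneg c S'⟩ ⟨S, h.1, h.2, rfl⟩

lemma setBudget_nonneg (r : ι → ι → Prop) (c : ι → ℝ) (X : Finset ι) : 0 ≤ setBudget r c X :=
  Real.sInf_nonneg <| by rintro _ ⟨S', -, -, rfl⟩; exact listBudget_nonneg c S'

lemma IsFeasible.exists_listBudget_eq_setBudget (h : IsFeasible r X S) :
    ∃ S', IsFeasible r X S' ∧ listBudget c S' = setBudget r c X := by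
  set B := {b | ∃ S', IsScheduleOf X S' ∧ RespectsOrder r S' ∧ listBudget c S' = b}
  have hne : B.Nonempty := ⟨_, S, h.1, h.2, rfl⟩
  have hfin : B.Finite :=
    ((X.toList.permutations.finite_toSet).image (listBudget c)).subset <| by
      rintro _ ⟨S', hS', -, rfl⟩
      refine ⟨S', List.mem_permutations.mpr ?_, rfl⟩
      exact (List.perm_ext_iff_of_nodup hS'.1 X.nodup_toList).mpr fun j => by
        rw [hS'.2, Finset.mem_toList]
  obtain ⟨S', hS', hr, hb⟩ := hne.csInf_mem hfin
  exact ⟨S', ⟨hS', hr⟩, hb⟩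

lemma IsFeasible.setCost_le_setBudget (h : IsFeasible r X S) : setCost c X ≤ setBudget r c X := by
  obtain ⟨S', hS', hb⟩ := h.exists_listBudget_eq_setBudget (c := c)
  rw [← hb, ← hS'.listCost_eq]
  simpa using listCost_take_le_listBudget c S' S'.length

lemma IsFeasible.exists_setBudget_le_setCost_take_inter (h : IsFeasible r N S) (hX : X ⊆ N) :
    ∃ n ≤ S.length, setBudget r c X ≤ setCost c ((S.take n).toFinset ∩ X) := by
  obtain ⟨m, hm⟩ := exists_listCost_take_eq_listBudget c (S.filter (· ∈ X))
  obtain ⟨n, hn, hmn⟩ := List.exists_take_filter_eq (· ∈ X) S m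
  refine ⟨n, hn, ?_⟩
  rw [← listCost_filter_take c h.nodup, ← hmn, hm]
  exact setBudget_le_listBudget (h.filter hX)

lemma IsFeasible.exists_setCost_sdiff_take_le_setReturn (h : IsFeasible r N S) (hX : X ⊆ N) :
    ∃ n ≤ S.length, setCost c (X \ (S.take n).toFinset) ≤ setReturn r c X := by
  obtain ⟨n, hn, hb⟩ := h.exists_setBudget_le_setCost_take_inter (c := c) hX
  refine ⟨n, hn, ?_⟩
  have := Finset.sum_inter_add_sum_sdiff X (S.take n).toFinset c
  rw [Finset.inter_comm] at this
  unfold setReturn setCost at *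
  linarith

end SetBudget

section Cbr

variable {r : ι → ι → Prop} {c : ι → ℝ} {X Y : Finset ι}

lemma cbrLE.setCost_neg (h : cbrLE r c X Y) (hY : setCost c Y < 0) : setCost c X < 0 := by
  rcases h with h | h | h | h
  · exact h.1
  · exact h.1
  · exact h.1
  · linarith [h.2.1]

lemma cbrLE.setBudget_le (h : cbrLE r c X Y) (hY : setCost c Y < 0) :
    setBudget r c X ≤ setBudget r c Y := by
  rcases h with h | h | h | h
  · linarith [h.2]
  · exact h.2.2.le
  · exact h.2.2.1.le
  · linarith [h.2.1]

lemma cbrLE.setCost_nonneg (h : cbrLE r c X Y) (hX : 0 ≤ setCost c X) : 0 ≤ setCost c Y := by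
  rcases h with h | h | h | h
  · linarith [h.1]
  · linarith [h.1]
  · linarith [h.1]
  · exact h.2.1

lemma cbrLE.setReturn_le (h : cbrLE r c X Y) (hX : 0 ≤ setCost c X) :
    setReturn r c X ≤ setReturn r c Y := by
  rcases h with h | h | h | h
  · linarith [h.1]
  · linarith [h.1]
  · linarith [h.1]
  · exact h.2.2

lemma cbrLE.setBudget_lt (h : cbrLE r c X Y) (hYX : setCost c Y < setCost c X)
    (hX : setCost c X < 0) : setBudget r c X < setBudget r c Y := by
  rcases h with h | h | h | h
  · linarith [h.2]
  · exact h.2.2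
  · have := h.2.2.2
    unfold setReturn at this
    linarith [h.2.2.1]
  · linarith [h.1]

end Cbr

/-- The cbr-condition of `IsIrreducibleIn`, without the requirement of being an interval. -/
def IsCbrIrreducible (r : ι → ι → Prop) (c : ι → ℝ) (I : Finset ι) : Prop :=
  ∀ J, IsIdealIn r I J → cbrLE r c I J

lemma IsIdealIn.union {r : ι → ι → Prop} {I J K : Finset ι} (hJ : IsIdealIn r I J)
    (hK : IsIdealIn r I K) : IsIdealIn r I (J ∪ K) := by
  refine ⟨Finset.union_subset hJ.1 hK.1, fun j hj i hi hij => ?_⟩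
  rcases Finset.mem_union.mp hj with hj | hj
  · exact Finset.mem_union_left _ (hJ.2 j hj i hi hij)
  · exact Finset.mem_union_right _ (hK.2 j hj i hi hij)

namespace IsCbrIrreducible

variable {r : ι → ι → Prop} {c : ι → ℝ} {N I B D : Finset ι} {S T : List ι}

lemma setCost_nonneg_of_isIdealIn (hI : IsCbrIrreducible r c I) (hc : 0 ≤ setCost c I)
    (hD : IsIdealIn r I D) : 0 ≤ setCost c D :=
  (hI D hD).setCost_nonneg hc

/-- Let `E` be an ideal of minimum cost. If `c(E) < c(I)`, then `b(I) < b(E)`, so some prefix `P`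
of an optimal schedule of `I` meets `E` in cost `≥ b(E) > b(I) ≥ c(P)`, and `E ∪ P` is a cheaper
ideal. -/
lemma setCost_le_of_isIdealIn (hI : IsCbrIrreducible r c I) (hS : IsFeasible r I S)
    (hneg : setCost c I < 0) (hD : IsIdealIn r I D) : setCost c I ≤ setCost c D := by
  classical
  obtain ⟨E, hE, hEmin⟩ := (I.powerset.filter (IsIdealIn r I)).exists_min_image (setCost c)
    ⟨D, Finset.mem_filter.mpr ⟨Finset.mem_powerset.mpr hD.1, hD⟩⟩
  have hEmin : ∀ F, IsIdealIn r I F → setCost c E ≤ setCost c F := fun F hF =>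
    hEmin F (Finset.mem_filter.mpr ⟨Finset.mem_powerset.mpr hF.1, hF⟩)
  have hE : IsIdealIn r I E := (Finset.mem_filter.mp hE).2
  refine le_trans ?_ (hEmin D hD)
  by_contra! hlt
  have hbud : setBudget r c I < setBudget r c E := (hI E hE).setBudget_lt hlt hneg
  obtain ⟨S', hS', hopt⟩ := hS.exists_listBudget_eq_setBudget (c := c)
  obtain ⟨n, -, hn⟩ := hS'.exists_setBudget_le_setCost_take_inter (c := c) hE.1
  set P := (S'.take n).toFinset
  have hPI : P ∩ I = P := Finset.inter_eq_left.mpr (hS'.toFinset_take_subset n)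
  have hcostP : setCost c P ≤ setBudget r c I := hopt ▸ setCost_take_le_listBudget c hS'.nodup n
  have hEP : IsIdealIn r I (E ∪ P) := hPI ▸ hE.union (hS'.isIdealIn_take_inter subset_rfl n)
  have hunion : setCost c (E ∪ P) + setCost c (P ∩ E) = setCost c E + setCost c P := by
    rw [Finset.inter_comm]; exact Finset.sum_union_inter
  linarith [hEmin _ hEP]

/-- Scheduling `D` and then `I \ D` optimally is feasible for `I`. If `b(I) ≤ b(D)`, then
`I ⪯ D` gives `c(I \ D) ≤ b(I) - b(D) ≤ 0`; otherwise `b(I) ≤ c(D) + b(I \ D)`. -/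
lemma setReturn_sdiff_le (hI : IsCbrIrreducible r c I) (hS : IsFeasible r I S)
    (hc : 0 ≤ setCost c I) (hD : IsIdealIn r I D) (hpos : 0 < setCost c (I \ D)) :
    setReturn r c (I \ D) ≤ setReturn r c I := by
  obtain ⟨SD, hSD, hoptD⟩ := (hS.filter hD.1).exists_listBudget_eq_setBudget (c := c)
  obtain ⟨SG, hSG, hoptG⟩ :=
    (hS.filter (Finset.sdiff_subset (t := D))).exists_listBudget_eq_setBudget (c := c)
  have hfeas : IsFeasible r I (SD ++ SG) := by
    have := hSD.append hSG Finset.disjoint_sdiff fun a ha b hb hba =>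
      (Finset.mem_sdiff.mp hb).2 (hD.2 a ha b (Finset.mem_sdiff.mp hb).1 hba)
    rwa [Finset.union_sdiff_of_subset hD.1] at this
  have hbud := setBudget_le_listBudget (c := c) hfeas
  rw [listBudget_append, hoptD, hoptG, hSD.listCost_eq] at hbud
  have hsplit : setCost c (I \ D) + setCost c D = setCost c I := Finset.sum_sdiff hD.1
  have hret := (hI D hD).setReturn_le hc
  unfold setReturn at hret ⊢
  rcases le_max_iff.mp hbud with h | h <;> linarith

/-- Every prefix of `T` meets `B` in an ideal, which costs at least `c(B)`. -/
lemma setCost_add_listBudget_filter_sdiff_le (hB : IsCbrIrreducible r c B)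
    (hneg : setCost c B < 0) (hT : IsFeasible r N T) (hBN : B ⊆ N) :
    setCost c B + listBudget c (T.filter (· ∈ N \ B)) ≤ listBudget c T := by
  suffices h : listBudget c (T.filter (· ∈ N \ B)) ≤ listBudget c T - setCost c B by linarith
  refine listBudget_filter_le hT.nodup fun n => ?_
  have hideal := hB.setCost_le_of_isIdealIn (hT.filter hBN) hneg (hT.isIdealIn_take_inter hBN n)
  have hsplit := Finset.sum_inter_add_sum_sdiff (T.take n).toFinset B c
  rw [← Finset.inter_sdiff_assoc, Finset.inter_eq_left.mpr (hT.toFinset_take_subset n)]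
  have := setCost_take_le_listBudget c hT.nodup n
  unfold setCost at *
  linarith

/-- Otherwise the remainder `G` has `ret(G) ≤ ret(B) ≤ 0`, and a prefix reaching `b(G)` on `G`
leaves a remainder of `B` of cost at most `ret(G)`: it cannot come after the `n`-th prefix, and
if it comes before, that remainder is `G` itself. -/
lemma setCost_sdiff_take_nonpos (hB : IsCbrIrreducible r c B) (hc : 0 ≤ setCost c B)
    (hT : IsFeasible r N T) (hBN : B ⊆ N) {n : ℕ}
    (hmax : ∀ m, n < m → m ≤ T.length →
      setReturn r c B < setCost c (B \ (T.take m).toFinset)) :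
    setCost c (B \ (T.take n).toFinset) ≤ 0 := by
  by_contra! hpos
  have hG : B \ ((T.take n).toFinset ∩ B) = B \ (T.take n).toFinset :=
    Finset.sdiff_inter_self_right _ _
  have hretG := hB.setReturn_sdiff_le (hT.filter hBN) hc (hT.isIdealIn_take_inter hBN n)
    (hG ▸ hpos)
  rw [hG] at hretG
  have hretB : setReturn r c B ≤ 0 := by
    have := (hT.filter hBN).setCost_le_setBudget (c := c)
    unfold setReturn; linarith
  obtain ⟨m, hm, hdip⟩ := hT.exists_setCost_sdiff_take_le_setReturn (c := c)
    ((Finset.sdiff_subset (t := (T.take n).toFinset)).trans hBN)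
  rw [sdiff_sdiff_left, sup_comm, Finset.sup_eq_union] at hdip
  rcases le_or_gt m n with hle | hlt
  · rw [Finset.union_eq_right.mpr (List.toFinset_take_subset_toFinset_take hle)] at hdip
    linarith
  · rw [Finset.union_eq_left.mpr (List.toFinset_take_subset_toFinset_take hlt.le)] at hdip
    linarith [hmax m hlt hm]

end IsCbrIrreducible

def blockUnion (Bs : List (Finset ι)) : Finset ι := Bs.foldr (· ∪ ·) ∅

section Blocks

variable {c : ι → ℝ} {Bs : List (Finset ι)} {B : Finset ι}

@[simp] lemma blockUnion_cons : blockUnion (B :: Bs) = B ∪ blockUnion Bs := rfl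

lemma mem_blockUnion {x : ι} : x ∈ blockUnion Bs ↔ ∃ B ∈ Bs, x ∈ B := by
  induction Bs with
  | nil => simp [blockUnion]
  | cons B Bs ih => simp [ih]

lemma subset_blockUnion (hB : B ∈ Bs) : B ⊆ blockUnion Bs := fun _ hx =>
  mem_blockUnion.mpr ⟨B, hB, hx⟩

lemma disjoint_blockUnion (h : ∀ B' ∈ Bs, _root_.Disjoint B B') :
    _root_.Disjoint B (blockUnion Bs) :=
  Finset.disjoint_left.mpr fun _ hx hx' =>
    have ⟨B', hB', hxB'⟩ := mem_blockUnion.mp hx'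
    Finset.disjoint_left.mp (h B' hB') hx hxB'

lemma blockUnion_map_toFinset (SS : List (List ι)) :
    blockUnion (SS.map List.toFinset) = SS.flatten.toFinset := by
  ext x; simp [mem_blockUnion]

variable (c)

lemma setCost_blockUnion (hd : Bs.Pairwise _root_.Disjoint) :
    setCost c (blockUnion Bs) = (Bs.map (setCost c)).sum := by
  induction Bs with
  | nil => simp [blockUnion, setCost]
  | cons B Bs ih =>
    rw [List.pairwise_cons] at hd
    rw [blockUnion_cons, List.map_cons, List.sum_cons, ← ih hd.2]
    exact Finset.sum_union (disjoint_blockUnion hd.1)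

lemma setCost_inter_blockUnion (hd : Bs.Pairwise _root_.Disjoint) (X : Finset ι) :
    setCost c (X ∩ blockUnion Bs) = (Bs.map fun B => setCost c (X ∩ B)).sum := by
  induction Bs with
  | nil => simp [blockUnion, setCost]
  | cons B Bs ih =>
    rw [List.pairwise_cons] at hd
    rw [blockUnion_cons, List.map_cons, List.sum_cons, ← ih hd.2, Finset.inter_union_distrib_left]
    exact Finset.sum_union ((disjoint_blockUnion hd.1).mono Finset.inter_subset_right
      Finset.inter_subset_right)

lemma setCost_blockUnion_sdiff (hd : Bs.Pairwise _root_.Disjoint) (X : Finset ι) :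
    setCost c (blockUnion Bs \ X) = (Bs.map fun B => setCost c (B \ X)).sum := by
  induction Bs with
  | nil => simp [blockUnion, setCost]
  | cons B Bs ih =>
    rw [List.pairwise_cons] at hd
    rw [blockUnion_cons, List.map_cons, List.sum_cons, ← ih hd.2, Finset.union_sdiff_distrib]
    exact Finset.sum_union ((disjoint_blockUnion hd.1).mono Finset.sdiff_subset
      Finset.sdiff_subset)

end Blocks

section NonnegBlocks

variable {r : ι → ι → Prop} {c : ι → ℝ} {N : Finset ι} {K : List (Finset ι)} {T : List ι}

/-- Take the last prefix leaving, for some block `Bj`, a remainder of cost at most `ret(Bj)`; by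
`setCost_sdiff_take_nonpos` it leaves nonpositive remainders of all blocks. -/
lemma exists_setCost_blockUnion_sub_setReturn_le
    (hK : ∀ B ∈ K, IsCbrIrreducible r c B ∧ 0 ≤ setCost c B) (hd : K.Pairwise _root_.Disjoint)
    (hne : K ≠ []) (hT : IsFeasible r N T) (hKN : blockUnion K ⊆ N) :
    ∃ Bj ∈ K, ∃ n, setCost c (blockUnion K) - setReturn r c Bj ≤
      setCost c ((T.take n).toFinset ∩ blockUnion K) := by
  classical
  let leavesDip n := ∃ B ∈ K, setCost c (B \ (T.take n).toFinset) ≤ setReturn r c B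
  obtain ⟨B₁, hB₁⟩ := List.exists_mem_of_ne_nil K hne
  obtain ⟨m, hm, hdip⟩ :=
    hT.exists_setCost_sdiff_take_le_setReturn (c := c) ((subset_blockUnion hB₁).trans hKN)
  set n₀ := Nat.findGreatest leavesDip T.length
  obtain ⟨Bj, hBj, hdipj⟩ := Nat.findGreatest_spec (P := leavesDip) hm ⟨B₁, hB₁, hdip⟩
  have hrest : ∀ B ∈ K, setCost c (B \ (T.take n₀).toFinset) ≤ 0 := fun B hB =>
    (hK B hB).1.setCost_sdiff_take_nonpos (hK B hB).2 hT ((subset_blockUnion hB).trans hKN)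
      fun m' hlt hm' => by
        by_contra! h
        exact absurd (Nat.le_findGreatest hm' ⟨B, hB, h⟩) (not_le.mpr hlt)
  obtain ⟨M₁, M₂, rfl⟩ := List.append_of_mem hBj
  have hsum : setCost c (blockUnion (M₁ ++ Bj :: M₂) \ (T.take n₀).toFinset) ≤
      setReturn r c Bj := by
    rw [setCost_blockUnion_sdiff c hd, List.map_append, List.sum_append, List.map_cons,
      List.sum_cons]
    have h₁ := List.sum_map_nonpos fun B hB => hrest B (List.mem_append_left _ hB)
    have h₂ := List.sum_map_nonpos fun B hB =>
      hrest B (List.mem_append_right _ (List.mem_cons_of_mem _ hB))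
    linarith
  refine ⟨Bj, hBj, n₀, ?_⟩
  have := Finset.sum_inter_add_sum_sdiff (blockUnion (M₁ ++ Bj :: M₂)) (T.take n₀).toFinset c
  rw [Finset.inter_comm] at this
  unfold setCost at *
  linarith

end NonnegBlocks

/-- The conditions of `IncIrrStructure` on the job sets of the blocks. -/
structure IncIrrBlocks (r : ι → ι → Prop) (c : ι → ℝ) (Bs : List (Finset ι)) : Prop where
  irreducible : ∀ B ∈ Bs, IsCbrIrreducible r c B
  sorted : Bs.Pairwise (cbrLE r c)
  disjoint : Bs.Pairwise _root_.Disjoint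

namespace IncIrrBlocks

variable {r : ι → ι → Prop} {c : ι → ℝ} {B₀ B D : Finset ι} {Bs L₂ : List (Finset ι)}
  {T : List ι}

lemma tail (h : IncIrrBlocks r c (B₀ :: Bs)) : IncIrrBlocks r c Bs :=
  ⟨fun B hB => h.irreducible B (List.mem_cons_of_mem _ hB), h.sorted.of_cons, h.disjoint.of_cons⟩

lemma setBudget_head_le_of_isIdealIn (h : IncIrrBlocks r c (B₀ :: Bs)) (hB : B ∈ B₀ :: Bs)
    (hD : IsIdealIn r B D) (hneg : setCost c D < 0) : setBudget r c B₀ ≤ setBudget r c D := by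
  have hBD := h.irreducible B hB D hD
  refine le_trans ?_ (hBD.setBudget_le hneg)
  rcases List.mem_cons.mp hB with rfl | hB
  · exact le_rfl
  · exact (List.rel_of_pairwise_cons h.sorted hB).setBudget_le (hBD.setCost_neg hneg)

/-- Take the shortest prefix meeting some block in cost at least `b(B₀)`. If it met another block
in negative cost, that intersection would be an ideal of budget `≥ b(B₀)`, reached by a shorter
prefix. So it meets all blocks in nonnegative cost, and itself costs at least `b(B₀)`. -/
lemma setBudget_head_le_listBudget (h : IncIrrBlocks r c (B₀ :: Bs))
    (hT : IsFeasible r (blockUnion (B₀ :: Bs)) T) : setBudget r c B₀ ≤ listBudget c T := by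
  classical
  have hex : ∃ n, ∃ B ∈ B₀ :: Bs, setBudget r c B₀ ≤ setCost c ((T.take n).toFinset ∩ B) := by
    obtain ⟨n, -, hn⟩ :=
      hT.exists_setBudget_le_setCost_take_inter (c := c) (subset_blockUnion List.mem_cons_self)
    exact ⟨n, B₀, List.mem_cons_self, hn⟩
  set n₀ := Nat.find hex
  obtain ⟨Bl, hBl, hβ⟩ := Nat.find_spec hex
  have htraces : ∀ B ∈ B₀ :: Bs, 0 ≤ setCost c ((T.take n₀).toFinset ∩ B) := by
    intro B hB
    by_contra! hneg
    have hBN := subset_blockUnion hB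
    have hD := hT.isIdealIn_take_inter hBN n₀
    have hβD := h.setBudget_head_le_of_isIdealIn hB hD hneg
    obtain ⟨m, -, hm⟩ := hT.exists_setBudget_le_setCost_take_inter (c := c) (hD.1.trans hBN)
    rw [← Finset.inter_assoc] at hm
    rcases lt_or_ge m n₀ with hlt | hge
    · rw [Finset.inter_eq_left.mpr (List.toFinset_take_subset_toFinset_take hlt.le)] at hm
      exact Nat.find_min hex hlt ⟨B, hB, hβD.trans hm⟩
    · rw [Finset.inter_eq_right.mpr (List.toFinset_take_subset_toFinset_take hge)] at hm
      linarith [setBudget_nonneg r c B₀]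
  calc setBudget r c B₀
      ≤ setCost c ((T.take n₀).toFinset ∩ Bl) := hβ
    _ ≤ ((B₀ :: Bs).map fun B => setCost c ((T.take n₀).toFinset ∩ B)).sum :=
        List.single_le_sum (by simpa using htraces) _ (List.mem_map_of_mem hBl)
    _ = setCost c (T.take n₀).toFinset := by
        rw [← setCost_inter_blockUnion c h.disjoint,
          Finset.inter_eq_left.mpr (hT.toFinset_take_subset n₀)]
    _ ≤ listBudget c T := setCost_take_le_listBudget c hT.nodup n₀

lemma setCost_add_setBudget_le_of_nonneg {L₁ : List (Finset ι)}
    (h : IncIrrBlocks r c (L₁ ++ B :: L₂)) (hnn : ∀ B' ∈ L₁ ++ B :: L₂, 0 ≤ setCost c B')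
    (hT : IsFeasible r (blockUnion (L₁ ++ B :: L₂)) T) :
    setCost c (blockUnion L₁) + setBudget r c B ≤ listBudget c T := by
  have hsplit : L₁ ++ B :: L₂ = (L₁ ++ [B]) ++ L₂ := by simp
  have hmemK : ∀ B' ∈ L₁ ++ [B], B' ∈ L₁ ++ B :: L₂ := fun B' hB' =>
    hsplit ▸ List.mem_append_left _ hB'
  have hdK : (L₁ ++ [B]).Pairwise _root_.Disjoint :=
    h.disjoint.sublist (hsplit ▸ List.sublist_append_left _ _)
  obtain ⟨Bj, hBj, n, hn⟩ := exists_setCost_blockUnion_sub_setReturn_le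
    (fun B' hB' => ⟨h.irreducible B' (hmemK B' hB'), hnn B' (hmemK B' hB')⟩) hdK (by simp) hT
    fun x hx => have ⟨B', hB', hx⟩ := mem_blockUnion.mp hx
      mem_blockUnion.mpr ⟨B', hmemK B' hB', hx⟩
  have hret : setReturn r c Bj ≤ setReturn r c B := by
    rcases List.mem_append.mp hBj with hBj | hBj
    · exact ((List.pairwise_append.mp h.sorted).2.2 Bj hBj B List.mem_cons_self).setReturn_le
        (hnn Bj (List.mem_append_left _ hBj))
    · rw [List.mem_singleton.mp hBj]
  have hcostK : setCost c (blockUnion (L₁ ++ [B])) = setCost c (blockUnion L₁) + setCost c B := by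
    rw [setCost_blockUnion c hdK, setCost_blockUnion c (hdK.sublist (List.sublist_append_left _ _))]
    simp
  have htrunc : setCost c ((T.take n).toFinset ∩ blockUnion (L₁ ++ [B])) ≤
      setCost c (T.take n).toFinset := by
    have hall := setCost_inter_blockUnion c h.disjoint (T.take n).toFinset
    rw [Finset.inter_eq_left.mpr (hT.toFinset_take_subset n), hsplit, List.map_append,
      List.sum_append, ← setCost_inter_blockUnion c hdK] at hall
    have : 0 ≤ (L₂.map fun B' => setCost c ((T.take n).toFinset ∩ B')).sum :=
      List.sum_nonneg fun x hx => by
        obtain ⟨B', hB', rfl⟩ := List.mem_map.mp hx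
        have hB'mem : B' ∈ L₁ ++ B :: L₂ := hsplit ▸ List.mem_append_right _ hB'
        exact (h.irreducible B' hB'mem).setCost_nonneg_of_isIdealIn (hnn B' hB'mem)
          (hT.isIdealIn_take_inter (subset_blockUnion hB'mem) n)
    linarith
  have := setCost_take_le_listBudget c hT.nodup n
  unfold setReturn at hret hn
  linarith

/-- Negative blocks at the front are peeled off one at a time; once the front block is
nonnegative, so are all later ones. -/
theorem setCost_add_setBudget_le : ∀ {L₁ : List (Finset ι)} {T : List ι},
    IncIrrBlocks r c (L₁ ++ B :: L₂) → IsFeasible r (blockUnion (L₁ ++ B :: L₂)) T →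
    setCost c (blockUnion L₁) + setBudget r c B ≤ listBudget c T
  | [], T, h, hT => by simpa [blockUnion, setCost] using h.setBudget_head_le_listBudget hT
  | B₀ :: L₁, T, h, hT => by
    rw [List.cons_append] at h hT
    have hdisj := List.pairwise_cons.mp h.disjoint
    rcases lt_or_ge (setCost c B₀) 0 with hneg | hnn
    · have hpeel := (h.irreducible B₀ List.mem_cons_self).setCost_add_listBudget_filter_sdiff_le
        hneg hT (subset_blockUnion List.mem_cons_self)
      have hT' : IsFeasible r (blockUnion (L₁ ++ B :: L₂))
          (T.filter (· ∈ blockUnion (B₀ :: (L₁ ++ B :: L₂)) \ B₀)) := by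
        rw [← Finset.union_sdiff_cancel_left (disjoint_blockUnion hdisj.1)]
        exact hT.filter Finset.sdiff_subset
      have ih := setCost_add_setBudget_le h.tail hT'
      have hcost : setCost c (blockUnion (B₀ :: L₁)) = setCost c B₀ + setCost c (blockUnion L₁) :=
        Finset.sum_union (disjoint_blockUnion fun B' hB' => hdisj.1 B' (List.mem_append_left _ hB'))
      linarith
    · refine h.setCost_add_setBudget_le_of_nonneg (fun B' hB' => ?_) hT
      rcases List.mem_cons.mp hB' with rfl | hB'
      · exact hnn
      · exact (List.rel_of_pairwise_cons h.sorted hB').setCost_nonneg hnn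

end IncIrrBlocks

namespace IncIrrStructure

variable {r : ι → ι → Prop} {c : ι → ℝ} {N : Finset ι} {SS : List (List ι)} {T : List ι}

lemma isFeasible (h : IncIrrStructure r c N SS) : IsFeasible r N SS.flatten := ⟨h.1, h.2.1⟩

lemma incIrrBlocks (h : IncIrrStructure r c N SS) : IncIrrBlocks r c (SS.map List.toFinset) where
  irreducible B hB := by
    obtain ⟨S, hS, rfl⟩ := List.mem_map.mp hB
    exact (h.2.2.1 S hS).1.2
  sorted := List.pairwise_map.mpr (List.pairwise_iff_get.mpr h.2.2.2)
  disjoint := List.pairwise_map.mpr <|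
    (List.nodup_flatten.mp h.1.1).2.imp List.disjoint_toFinset_iff_disjoint.mpr

theorem listBudget_le (h : IncIrrStructure r c N SS) (hT : IsFeasible r N T) :
    listBudget c SS.flatten ≤ listBudget c T := by
  refine listBudget_flatten_le c (listBudget_nonneg c T) fun L₁ B L₂ hSS => ?_
  subst hSS
  have hL₁ : listCost c L₁.flatten = setCost c (blockUnion (L₁.map List.toFinset)) := by
    rw [blockUnion_map_toFinset]
    refine listCost_eq_setCost c ?_
    simpa using (List.nodup_append.mp (List.flatten_append ▸ h.1.1)).1
  rw [hL₁, (h.2.2.1 B (by simp)).2.2]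
  have hblocks := h.incIrrBlocks
  have hunion : blockUnion ((L₁ ++ B :: L₂).map List.toFinset) = N := by
    rw [blockUnion_map_toFinset, h.isFeasible.toFinset_eq]
  simp only [List.map_append, List.map_cons] at hblocks hunion
  exact hblocks.setCost_add_setBudget_le (hunion ▸ hT)

end IncIrrStructure

section Series

variable {r₁ r₂ : ι → ι → Prop} {N₁ N₂ : Finset ι} {S T : List ι}

lemma IsFeasible.series_append (hd : _root_.Disjoint N₁ N₂) (hS : IsFeasible r₁ N₁ S)
    (hT : IsFeasible r₂ N₂ T) : IsFeasible (seriesRel r₁ r₂ N₁ N₂) (N₁ ∪ N₂) (S ++ T) := by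
  have h₁₂ {x} (h₁ : x ∈ N₁) (h₂ : x ∈ N₂) : False := Finset.disjoint_left.mp hd h₁ h₂
  refine (hS.of_rel_imp ?_).append (hT.of_rel_imp ?_) hd ?_
  · rintro a ha b hb (⟨-, -, h⟩ | ⟨ha', -, -⟩ | ⟨-, hb'⟩)
    exacts [h, (h₁₂ ha ha').elim, (h₁₂ hb hb').elim]
  · rintro a ha b hb (⟨ha', -, -⟩ | ⟨-, -, h⟩ | ⟨ha', -⟩)
    exacts [(h₁₂ ha' ha).elim, h, (h₁₂ ha' ha).elim]
  · rintro a ha b hb (⟨hb', -, -⟩ | ⟨-, ha', -⟩ | ⟨hb', -⟩)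
    exacts [h₁₂ hb' hb, h₁₂ ha ha', h₁₂ hb' hb]

lemma IsFeasible.filter_append_filter_of_series (hd : _root_.Disjoint N₁ N₂)
    (hT : IsFeasible (seriesRel r₁ r₂ N₁ N₂) (N₁ ∪ N₂) T) :
    T.filter (· ∈ N₁) ++ T.filter (· ∈ N₂) = T := by
  have hmem {x} (hx : x ∈ T) : x ∈ N₁ ∨ x ∈ N₂ := Finset.mem_union.mp (hT.mem_iff.mp hx)
  have hsplit := List.filter_append_filter_not_eq_self (p := (· ∈ N₁)) <|
    hT.pairwise.imp_of_mem fun {a b} ha hb hab hb₁ => by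
      by_contra ha₁
      exact hab (Or.inr (Or.inr ⟨by simpa using hb₁, (hmem ha).resolve_left (by simpa using ha₁)⟩))
  rwa [List.filter_congr (p := fun x => !decide (x ∈ N₁)) (q := (· ∈ N₂)) fun x hx => by
    rcases hmem hx with h | h <;> simp [h, Finset.disjoint_left.mp hd, Finset.disjoint_right.mp hd]]
    at hsplit

end Series

theorem series_concat_optimal_general (r1 r2 : ι → ι → Prop)
    (c : ι → ℝ) (N1 N2 : Finset ι) (hd : Disjoint N1 N2)
    (SS1 SS2 : List (List ι))
    (hS1 : IncIrrStructure r1 c N1 SS1) (hS2 : IncIrrStructure r2 c N2 SS2) :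
    IsScheduleOf (N1 ∪ N2) (SS1.flatten ++ SS2.flatten) ∧
    RespectsOrder (seriesRel r1 r2 N1 N2) (SS1.flatten ++ SS2.flatten) ∧
    listBudget c (SS1.flatten ++ SS2.flatten) = setBudget (seriesRel r1 r2 N1 N2) c (N1 ∪ N2) := by
  have hF := hS1.isFeasible.series_append hd hS2.isFeasible
  refine ⟨hF.1, hF.2, le_antisymm ?_ (setBudget_le_listBudget hF)⟩
  refine le_csInf ⟨_, _, hF.1, hF.2, rfl⟩ ?_
  rintro _ ⟨T, hT₁, hT₂, rfl⟩
  have hT : IsFeasible _ _ T := ⟨hT₁, hT₂⟩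
  have hT₁ := (hT.filter Finset.subset_union_left).of_rel_imp (r' := r1) fun a ha b hb h =>
    Or.inl ⟨ha, hb, h⟩
  have hT₂ := (hT.filter Finset.subset_union_right).of_rel_imp (r' := r2) fun a ha b hb h =>
    Or.inr (Or.inl ⟨ha, hb, h⟩)
  rw [← hT.filter_append_filter_of_series hd, listBudget_append, listBudget_append,
    hS1.isFeasible.listCost_eq, hT₁.listCost_eq]
  exact max_le_max (hS1.listBudget_le hT₁) (add_le_add le_rfl (hS2.listBudget_le hT₂))

theorem series_concat_optimal (r1 r2 : ι → ι → Prop)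
    (h1 : IsPartialOrder ι r1) (h2 : IsPartialOrder ι r2)
    (c : ι → ℝ) (N1 N2 : Finset ι) (hd : Disjoint N1 N2)
    (SS1 SS2 : List (List ι))
    (hS1 : IncIrrStructure r1 c N1 SS1) (hS2 : IncIrrStructure r2 c N2 SS2) :
    IsScheduleOf (N1 ∪ N2) (SS1.flatten ++ SS2.flatten) ∧
    RespectsOrder (seriesRel r1 r2 N1 N2) (SS1.flatten ++ SS2.flatten) ∧
    listBudget c (SS1.flatten ++ SS2.flatten) = setBudget (seriesRel r1 r2 N1 N2) c (N1 ∪ N2) :=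
  series_concat_optimal_general r1 r2 c N1 N2 hd SS1 SS2 hS1 hS2
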